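/- arXiv:2001.11355 — 3 statements merged into one kernel-verified Lean document; each statement's English description precedes it below -/
import Mathlib

section
/- Let g be applied entrywise to matrices, P and Q be K×K block matrices with diagonal blocks A, C and off-diagonal blocks B, D respectively, and Λ a block permutation matrix. Then Λᵀ · g(P H Qᵀ) · Λ = g(P (Λᵀ H Λ) Qᵀ) for every matrix H of compatible block dimensions. -/
/-!
Conjugating by `Λσ ⊗ 1` only reindexes rows and columns by `(i, m) ↦ (σ i, m)`. The shared-parameter
matrices `P` and `Q` are invariant under this simultaneous block relabelling, so the reindexing passes
through `P * H * Qᵀ` onto `H`; and an entrywise `g` commutes with any reindexing.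
-/

open Matrix Kronecker

namespace Matrix

variable {R ι m n : Type*}

theorem transpose_kronecker_one_mul_mul_kronecker_one [CommSemiring R] [Fintype ι] [DecidableEq ι]
    [Fintype m] [DecidableEq m] [Fintype n] [DecidableEq n]
    (σ : Equiv.Perm ι) (M : Matrix (ι × m) (ι × n) R) :
    (of (fun i j => if i = σ j then 1 else 0) ⊗ₖ (1 : Matrix m m R))ᵀ * M *
        (of (fun i j => if i = σ j then 1 else 0) ⊗ₖ (1 : Matrix n n R)) =
      M.submatrix (σ.prodCongr (Equiv.refl m)) (σ.prodCongr (Equiv.refl n)) := by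
  ext ⟨i, a⟩ ⟨j, b⟩
  simp [mul_apply, Fintype.sum_prod_type, one_apply]

theorem submatrix_prodCongr_ite_fst_eq [DecidableEq ι] (σ : Equiv.Perm ι) (A B : Matrix m n R) :
    (of fun (p : ι × m) (q : ι × n) => if p.1 = q.1 then A p.2 q.2 else B p.2 q.2).submatrix
        (σ.prodCongr (Equiv.refl m)) (σ.prodCongr (Equiv.refl n)) =
      of fun p q => if p.1 = q.1 then A p.2 q.2 else B p.2 q.2 := by
  ext ⟨i, a⟩ ⟨j, b⟩
  simp

theorem submatrix_mul_mul_transpose_of_submatrix_eq {l o : Type*} [NonUnitalCommSemiring R]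
    [Fintype m] [Fintype n] (P : Matrix l m R) (H : Matrix m n R) (Q : Matrix o n R)
    (e₁ : l → l) (e₂ : o → o) (f₁ : m ≃ m) (f₂ : n ≃ n)
    (hP : P.submatrix e₁ f₁ = P) (hQ : Q.submatrix e₂ f₂ = Q) :
    (P * H * Qᵀ).submatrix e₁ e₂ = P * H.submatrix f₁ f₂ * Qᵀ := by
  conv_rhs => rw [← hP, ← hQ, transpose_submatrix, submatrix_mul_equiv, submatrix_mul_equiv]

end Matrix

/-- Hidden-layer equivariance step in the proof of Proposition 4:
`Λᵀ g(P H Qᵀ) Λ = g(P (Λᵀ H Λ) Qᵀ)` for entrywise `g` and the shared-parameter `P`, `Q`. -/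
theorem stmt_10 {K N₁ N₂ M₁ M₂ : ℕ} (σ : Equiv.Perm (Fin K)) (g : ℝ → ℝ)
    (A B : Matrix (Fin M₁) (Fin N₁) ℝ) (C D : Matrix (Fin M₂) (Fin N₂) ℝ)
    (H : Matrix (Fin K × Fin N₁) (Fin K × Fin N₂) ℝ) :
    let Λσ : Matrix (Fin K) (Fin K) ℝ := Matrix.of fun i j => if i = σ j then 1 else 0
    let P : Matrix (Fin K × Fin M₁) (Fin K × Fin N₁) ℝ :=
      Matrix.of fun p q => if p.1 = q.1 then A p.2 q.2 else B p.2 q.2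
    let Q : Matrix (Fin K × Fin M₂) (Fin K × Fin N₂) ℝ :=
      Matrix.of fun p q => if p.1 = q.1 then C p.2 q.2 else D p.2 q.2
    (Λσ ⊗ₖ (1 : Matrix (Fin M₁) (Fin M₁) ℝ))ᵀ * ((P * H * Qᵀ).map g) *
        (Λσ ⊗ₖ (1 : Matrix (Fin M₂) (Fin M₂) ℝ)) =
      (P * ((Λσ ⊗ₖ (1 : Matrix (Fin N₁) (Fin N₁) ℝ))ᵀ * H *
        (Λσ ⊗ₖ (1 : Matrix (Fin N₂) (Fin N₂) ℝ))) * Qᵀ).map g := by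
  intro Λσ P Q
  rw [transpose_kronecker_one_mul_mul_kronecker_one, transpose_kronecker_one_mul_mul_kronecker_one,
    submatrix_map, submatrix_mul_mul_transpose_of_submatrix_eq _ _ _ _ _ _ _
    (submatrix_prodCongr_ite_fst_eq σ A B) (submatrix_prodCongr_ite_fst_eq σ C D)]
end

section
/- The full PINN-2D map y = diag(g^{[L]}(P^{[L]} g^{[L−1]}(⋯ g^{[2]}(P^{[2]} X (Q^{[2]})ᵀ)⋯) (Q^{[L]})ᵀ)), with each P^{[l]}, Q^{[l]} having the diagonal/off-diagonal two-sub-matrix block structure and g^{[l]} applied entrywise, is 2D permutation equivariant: replacing X by Λᵀ X Λ replaces y by Λᵀ y for every block permutation matrix Λ. -/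
open Matrix Kronecker

/-!
Conjugating by the block permutation matrix `Λ` is the simultaneous reindexing of rows and
columns by `σ` acting on the block index. Matrices with one sub-matrix on all diagonal blocks
and another on all off-diagonal blocks are fixed by such a reindexing, and reindexing commutes
with products, transposes and entrywise maps, so it passes through every layer.
-/

/-- Apply the layers `(P, Q, g)` of a PINN-2D, each acting as `H ↦ g(P H Qᵀ)`; the last list
element is the first layer. -/
def applyLayers2D {K N : ℕ} :
    List (Matrix (Fin K × Fin N) (Fin K × Fin N) ℝ ×
      Matrix (Fin K × Fin N) (Fin K × Fin N) ℝ × (ℝ → ℝ)) →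
      Matrix (Fin K × Fin N) (Fin K × Fin N) ℝ →
      Matrix (Fin K × Fin N) (Fin K × Fin N) ℝ
  | [], X => X
  | (P, Q, g) :: rest, X => (P * (applyLayers2D rest X) * Qᵀ).map g

section Reindex

variable {α κ n : Type*} [DecidableEq κ]

/-- The two-sub-matrix block structure of equation (11). -/
def blockDiagOffDiag (A B : Matrix n n α) : Matrix (κ × n) (κ × n) α :=
  of fun p q => if p.1 = q.1 then A p.2 q.2 else B p.2 q.2

theorem blockDiagOffDiag_submatrix_prodCongr (A B : Matrix n n α) (σ : Equiv.Perm κ) :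
    (blockDiagOffDiag A B : Matrix (κ × n) (κ × n) α).submatrix
        (σ.prodCongr (Equiv.refl n)) (σ.prodCongr (Equiv.refl n)) =
      blockDiagOffDiag A B := by
  ext p q
  simp [blockDiagOffDiag]

theorem kronecker_one_eq_toMatrix_prodCongr [Fintype κ] [DecidableEq n]
    [Semiring α] (σ : Equiv.Perm κ) :
    (of fun i j => if i = σ j then (1 : α) else 0) ⊗ₖ (1 : Matrix n n α) =
      (σ.prodCongr (Equiv.refl n)).symm.toPEquiv.toMatrix := by
  ext p q
  simp [PEquiv.toMatrix_apply, one_apply, Prod.ext_iff, Equiv.eq_symm_apply, eq_comm, ← ite_and,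
    and_comm]

theorem transpose_mul_mul_toMatrix_symm [Fintype n] [DecidableEq n] [Semiring α]
    (e : Equiv.Perm n) (X : Matrix n n α) :
    (e.symm.toPEquiv.toMatrix)ᵀ * X * e.symm.toPEquiv.toMatrix = X.submatrix e e := by
  rw [← PEquiv.toMatrix_symm, ← Equiv.toPEquiv_symm, Equiv.symm_symm,
    PEquiv.toMatrix_toPEquiv_mul, PEquiv.mul_toMatrix_toPEquiv, Equiv.symm_symm]
  rfl

end Reindex

theorem applyLayers2D_submatrix {K N : ℕ}
    (layers : List (Matrix (Fin K × Fin N) (Fin K × Fin N) ℝ ×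
      Matrix (Fin K × Fin N) (Fin K × Fin N) ℝ × (ℝ → ℝ)))
    (e : Equiv.Perm (Fin K × Fin N))
    (hfix : ∀ PQg ∈ layers, PQg.1.submatrix e e = PQg.1 ∧ PQg.2.1.submatrix e e = PQg.2.1)
    (X : Matrix (Fin K × Fin N) (Fin K × Fin N) ℝ) :
    applyLayers2D layers (X.submatrix e e) = (applyLayers2D layers X).submatrix e e := by
  induction layers with
  | nil => rfl
  | cons PQg rest ih =>
    obtain ⟨P, Q, g⟩ := PQg
    obtain ⟨hP, hQ⟩ : P.submatrix e e = P ∧ Q.submatrix e e = Q := hfix _ List.mem_cons_self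
    rw [applyLayers2D, applyLayers2D, ih fun PQg h => hfix PQg (List.mem_cons_of_mem _ h),
      submatrix_map, ← submatrix_mul_equiv _ _ _ e, ← submatrix_mul_equiv _ _ _ e,
      ← transpose_submatrix, hP, hQ]

/-- Proposition 4: the full PINN-2D map
`y = diag(g^{[L]}(P^{[L]} ⋯ g^{[2]}(P^{[2]} X (Q^{[2]})ᵀ) ⋯ (Q^{[L]})ᵀ))`,
where every `P^{[l]}` and `Q^{[l]}` has the shared two-sub-matrix block structure of
equation (11), is 2D permutation equivariant: replacing `X` by `Λᵀ X Λ` replaces the vector of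
diagonal blocks `y` by its `σ`-permutation `Λᵀ y`. -/
theorem stmt_12 {K N : ℕ}
    (layers : List (Matrix (Fin K × Fin N) (Fin K × Fin N) ℝ ×
      Matrix (Fin K × Fin N) (Fin K × Fin N) ℝ × (ℝ → ℝ)))
    (hshared : ∀ PQg ∈ layers,
      (∃ A B : Matrix (Fin N) (Fin N) ℝ,
        PQg.1 = Matrix.of fun p q => if p.1 = q.1 then A p.2 q.2 else B p.2 q.2) ∧
      (∃ C D : Matrix (Fin N) (Fin N) ℝ,
        PQg.2.1 = Matrix.of fun p q => if p.1 = q.1 then C p.2 q.2 else D p.2 q.2))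
    (σ : Equiv.Perm (Fin K)) (X : Matrix (Fin K × Fin N) (Fin K × Fin N) ℝ) :
    let Λσ : Matrix (Fin K) (Fin K) ℝ := Matrix.of fun i j => if i = σ j then 1 else 0
    let Λ : Matrix (Fin K × Fin N) (Fin K × Fin N) ℝ :=
      Λσ ⊗ₖ (1 : Matrix (Fin N) (Fin N) ℝ)
    let diagBlocks : Matrix (Fin K × Fin N) (Fin K × Fin N) ℝ →
        (Fin K → Matrix (Fin N) (Fin N) ℝ) :=
      fun M k => Matrix.of fun i j => M (k, i) (k, j)
    diagBlocks (applyLayers2D layers (Λᵀ * X * Λ)) =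
      fun k => diagBlocks (applyLayers2D layers X) (σ k) := by
  intro Λσ Λ diagBlocks
  set e : Equiv.Perm (Fin K × Fin N) := σ.prodCongr (Equiv.refl (Fin N))
  have hfix : ∀ PQg ∈ layers, PQg.1.submatrix e e = PQg.1 ∧ PQg.2.1.submatrix e e = PQg.2.1 := by
    intro PQg hmem
    obtain ⟨⟨A, B, hP⟩, ⟨C, D, hQ⟩⟩ := hshared PQg hmem
    rw [hP, hQ]
    exact ⟨blockDiagOffDiag_submatrix_prodCongr A B σ, blockDiagOffDiag_submatrix_prodCongr C D σ⟩
  have hΛ : Λ = e.symm.toPEquiv.toMatrix := kronecker_one_eq_toMatrix_prodCongr σ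
  rw [hΛ, transpose_mul_mul_toMatrix_symm, applyLayers2D_submatrix layers e hfix]
  rfl
end

section
/- Let f : (Fin K → α) → (Fin K → β) be 1D permutation equivariant and suppose K ≥ 2. If x and x' agree in the k-th block (x_k = x'_k) and the multisets of remaining blocks agree ({x_n : n ≠ k} = {x'_n : n ≠ k} as multisets), then (f x)_k = (f x')_k. -/
/-!
The multisets of values of `x` and `x'` agree on all of `Fin K`, so `x' = x ∘ σ` for some
permutation `σ`, and equivariance gives `f x' k = f x (σ k)`. Since `x (σ k) = x' k = x k`,
the transposition of `k` and `σ k` fixes `x`, hence also `f x`, so `f x (σ k) = f x k`.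
-/

theorem exists_perm_comp_eq_of_map_univ_eq {ι β : Type*} [Fintype ι] {g g' : ι → β}
    (h : Finset.univ.val.map g = Finset.univ.val.map g') : ∃ σ : Equiv.Perm ι, g ∘ σ = g' := by
  classical
  have card_fiber (b : β) : Fintype.card {i // g' i = b} = Fintype.card {i // g i = b} := by
    have := congrArg (Multiset.count b) h
    simp only [Multiset.count_map] at this
    simp only [Fintype.card_subtype, Finset.card, Finset.filter_val]
    simpa only [eq_comm] using this.symm
  let e (b : β) : {i // g' i = b} ≃ {i // g i = b} := Fintype.equivOfCardEq (card_fiber b)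
  refine ⟨(Equiv.sigmaFiberEquiv g').symm.trans
    ((Equiv.sigmaCongrRight e).trans (Equiv.sigmaFiberEquiv g)), funext fun i => ?_⟩
  exact (e (g' i) ⟨i, rfl⟩).2

theorem apply_eq_apply_of_perm_equivariant {ι α β : Type*} [DecidableEq ι]
    {f : (ι → α) → (ι → β)} (hf : ∀ (σ : Equiv.Perm ι) (x : ι → α), f (x ∘ σ) = f x ∘ σ)
    {x : ι → α} {i j : ι} (hij : x i = x j) : f x i = f x j := by
  have hswap : x ∘ Equiv.swap i j = x := by
    rw [Equiv.comp_swap_eq_update, hij, Function.update_eq_self, ← hij, Function.update_eq_self]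
  calc f x i = f (x ∘ Equiv.swap i j) i := by rw [hswap]
    _ = f x j := by rw [hf, Function.comp_apply, Equiv.swap_apply_left]

theorem stmt_14_general {α β : Type*} {K : ℕ}
    (f : (Fin K → α) → (Fin K → β))
    (hf : ∀ (σ : Equiv.Perm (Fin K)) (x : Fin K → α), f (x ∘ σ) = (f x) ∘ σ)
    (x x' : Fin K → α) (k : Fin K)
    (hk : x k = x' k)
    (hrest : (Finset.univ.erase k).val.map x = (Finset.univ.erase k).val.map x') :
    f x k = f x' k := by
  have hall : Finset.univ.val.map x = Finset.univ.val.map x' := by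
    rw [← Finset.insert_erase (Finset.mem_univ k),
      Finset.insert_val_of_notMem (Finset.notMem_erase k _), Multiset.map_cons, Multiset.map_cons,
      hk, hrest]
  obtain ⟨σ, rfl⟩ := exists_perm_comp_eq_of_map_univ_eq hall
  rw [hf, Function.comp_apply]
  exact apply_eq_apply_of_perm_equivariant hf hk

/-- Observation (ii) after Proposition 1: for a 1D permutation equivariant `f`, the `k`-th
output block does not differentiate the order of the other input blocks. -/
theorem stmt_14 {α β : Type*} {K : ℕ} (hK : 2 ≤ K)
    (f : (Fin K → α) → (Fin K → β))
    (hf : ∀ (σ : Equiv.Perm (Fin K)) (x : Fin K → α), f (x ∘ σ) = (f x) ∘ σ)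
    (x x' : Fin K → α) (k : Fin K)
    (hk : x k = x' k)
    (hrest : (Finset.univ.erase k).val.map x = (Finset.univ.erase k).val.map x') :
    f x k = f x' k :=
  stmt_14_general f hf x x' k hk hrest
end
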